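/- Suppose the Hessian map x ↦ ∇²f(x) is L₂-Lipschitz in operator norm with L₂ > 0, and let θ ∈ (0,1/2), ζ ∈ (θ,1). Let x⁰ ∈ E, μ > 0, H = ∇²f(x⁰) + μ·Id, and let x̂ ∈ E satisfy q(x̂) − q(x⁰) ≤ ζ·(ℓ(x̂) − ℓ(x⁰)). If ‖x̂ − x⁰‖ ≤ (1 + (ζ−θ)/(1−ζ))·(3μ/L₂), then F(x̂) − F(x⁰) ≤ θ·(ℓ(x̂) − ℓ(x⁰)); that is, the line-search descent condition is satisfied with unit step size. -/

import Mathlib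

/-!
Along the segment from `x⁰` to `x̂ = x⁰ + d`, the `L₂`-Lipschitz Hessian gives the cubic upper bound
`f x̂ ≤ f x⁰ + ⟪∇f x⁰, d⟫ + ⟪∇²f x⁰ d, d⟫ / 2 + L₂ ‖d‖³ / 6`, and convexity makes `⟪∇²f x⁰ d, d⟫ ≥ 0`.
With `a = (ζ - θ)/(1 - ζ)` the distance bound reads `L₂ ‖d‖ / 3 ≤ (1 + a) μ`, so the cubic term is
at most `(1 + a)` times the regularization `μ ‖d‖² / 2`. Multiplying the model decrease
`(1 - ζ)(ℓ x̂ - ℓ x⁰) ≤ -(⟪∇²f x⁰ d, d⟫ + μ ‖d‖²) / 2` by `1 + a = (1 - θ)/(1 - ζ)` absorbs both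
second-order terms and leaves `F x̂ - F x⁰ ≤ θ (ℓ x̂ - ℓ x⁰)`.
-/

open scoped RealInnerProductSpace

abbrev E (n : ℕ) := EuclideanSpace ℝ (Fin n)

open Set

theorem sub_le_sub_of_hasDerivAt_le {u U u' U' : ℝ → ℝ} (hu : ∀ t, HasDerivAt u (u' t) t)
    (hU : ∀ t, HasDerivAt U (U' t) t) (hle : ∀ t, 0 < t → u' t ≤ U' t) {t : ℝ} (ht : 0 ≤ t) :
    u t - u 0 ≤ U t - U 0 := by
  have hmono : MonotoneOn (fun t ↦ U t - u t) (Ici 0) := by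
    refine monotoneOn_of_hasDerivWithinAt_nonneg (convex_Ici 0)
      (fun t _ ↦ ((hU t).sub (hu t)).continuousAt.continuousWithinAt)
      (fun t _ ↦ ((hU t).sub (hu t)).hasDerivWithinAt) fun t ht ↦ ?_
    rw [interior_Ici] at ht
    exact sub_nonneg.mpr (hle t ht)
  have := hmono self_mem_Ici ht ht
  linarith

theorem sub_sub_sub_le_of_hasDerivAt_of_sub_le {h p s : ℝ → ℝ} {M : ℝ}
    (hh : ∀ t, HasDerivAt h (p t) t) (hp : ∀ t, HasDerivAt p (s t) t)
    (hs : ∀ t, 0 < t → s t - s 0 ≤ M * t) :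
    h 1 - h 0 - p 0 - s 0 / 2 ≤ M / 6 := by
  have hquad (t : ℝ) : HasDerivAt (fun t ↦ t * s 0 + M / 2 * t ^ 2) (s 0 + M * t) t :=
    (((hasDerivAt_id' t).mul_const (s 0)).add
      ((hasDerivAt_pow 2 t).const_mul (M / 2))).congr_deriv (by norm_num; ring)
  have hcub (t : ℝ) : HasDerivAt (fun t ↦ t * p 0 + t ^ 2 / 2 * s 0 + M / 6 * t ^ 3)
      (p 0 + (t * s 0 + M / 2 * t ^ 2)) t :=
    ((((hasDerivAt_id' t).mul_const (p 0)).add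
      (((hasDerivAt_pow 2 t).div_const 2).mul_const (s 0))).add
      ((hasDerivAt_pow 3 t).const_mul (M / 6))).congr_deriv (by norm_num; ring)
  have hp_le (t : ℝ) (ht : 0 < t) : p t ≤ p 0 + (t * s 0 + M / 2 * t ^ 2) := by
    linarith [sub_le_sub_of_hasDerivAt_le hp hquad (fun t ht ↦ by linarith [hs t ht]) ht.le]
  linarith [sub_le_sub_of_hasDerivAt_le hh hcub hp_le zero_le_one]

section Hessian

variable {F : Type*} [NormedAddCommGroup F] [InnerProductSpace ℝ F]
  {f : F → ℝ} {f' : F → F} {x d : F} {t : ℝ}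

theorem real_inner_apply_self_le (A : F →L[ℝ] F) (d : F) : ⟪A d, d⟫ ≤ ‖A‖ * ‖d‖ ^ 2 :=
  calc ⟪A d, d⟫ ≤ ‖A d‖ * ‖d‖ := real_inner_le_norm _ _
    _ ≤ ‖A‖ * ‖d‖ * ‖d‖ := by gcongr; exact A.le_opNorm d
    _ = ‖A‖ * ‖d‖ ^ 2 := by ring

theorem HasFDerivAt.hasDerivAt_inner_comp_add_smul {A : F →L[ℝ] F}
    (hf' : HasFDerivAt f' A (x + t • d)) :
    HasDerivAt (fun t : ℝ ↦ ⟪f' (x + t • d), d⟫) ⟪A d, d⟫ t := by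
  have hline : HasDerivAt (fun t : ℝ ↦ x + t • d) d t := by
    simpa using ((hasDerivAt_id t).smul_const d).const_add x
  simpa using (hf'.comp_hasDerivAt t hline).inner ℝ (hasDerivAt_const t d)

variable [CompleteSpace F]

theorem HasGradientAt.hasDerivAt_comp_add_smul {g : F} (hf : HasGradientAt f g (x + t • d)) :
    HasDerivAt (fun t : ℝ ↦ f (x + t • d)) ⟪g, d⟫ t := by
  have hline : HasDerivAt (fun t : ℝ ↦ x + t • d) d t := by
    simpa using ((hasDerivAt_id t).smul_const d).const_add x
  simpa [Function.comp_def, InnerProductSpace.toDual_apply_apply]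
    using hf.hasFDerivAt.comp_hasDerivAt t hline

theorem ConvexOn.inner_hessian_self_nonneg {A : F →L[ℝ] F} (hf : ConvexOn ℝ univ f)
    (hgrad : ∀ y, HasGradientAt f (f' y) y) (hhess : HasFDerivAt f' A x) (d : F) :
    0 ≤ ⟪A d, d⟫ := by
  have hline (t : ℝ) := (hgrad (x + t • d)).hasDerivAt_comp_add_smul
  have hconv : ConvexOn ℝ univ (fun t : ℝ ↦ f (x + t • d)) := by
    simpa [Function.comp_def, AffineMap.lineMap_apply, add_comm]
      using hf.comp_affineMap (AffineMap.lineMap x (x + d))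
  have hmono : Monotone (fun t : ℝ ↦ ⟪f' (x + t • d), d⟫) := by
    rw [← funext fun t ↦ (hline t).deriv, ← monotoneOn_univ]
    exact hconv.monotoneOn_deriv fun t _ ↦ (hline t).differentiableAt
  have hhess0 : HasFDerivAt f' A (x + (0 : ℝ) • d) := by simpa using hhess
  exact hhess0.hasDerivAt_inner_comp_add_smul.nonneg_of_monotone hmono

theorem le_second_order_taylor_add_cubic {hess : F → F →L[ℝ] F} {L : ℝ}
    (hgrad : ∀ y, HasGradientAt f (f' y) y) (hhess : ∀ y, HasFDerivAt f' (hess y) y)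
    (hlip : ∀ y z, ‖hess y - hess z‖ ≤ L * ‖y - z‖) (x y : F) :
    f y ≤ f x + ⟪f' x, y - x⟫ + ⟪hess x (y - x), y - x⟫ / 2 + L / 6 * ‖y - x‖ ^ 3 := by
  set d := y - x
  have hgrowth (t : ℝ) (ht : 0 < t) :
      ⟪hess (x + t • d) d, d⟫ - ⟪hess (x + (0 : ℝ) • d) d, d⟫ ≤ L * ‖d‖ ^ 3 * t := by
    calc ⟪hess (x + t • d) d, d⟫ - ⟪hess (x + (0 : ℝ) • d) d, d⟫
        = ⟪(hess (x + t • d) - hess x) d, d⟫ := by simp [inner_sub_left]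
      _ ≤ ‖hess (x + t • d) - hess x‖ * ‖d‖ ^ 2 := real_inner_apply_self_le _ _
      _ ≤ L * ‖t • d‖ * ‖d‖ ^ 2 := by gcongr; simpa using hlip (x + t • d) x
      _ = L * ‖d‖ ^ 3 * t := by rw [norm_smul, Real.norm_of_nonneg ht.le]; ring
  have := sub_sub_sub_le_of_hasDerivAt_of_sub_le
    (fun t ↦ (hgrad (x + t • d)).hasDerivAt_comp_add_smul)
    (fun t ↦ (hhess (x + t • d)).hasDerivAt_inner_comp_add_smul) hgrowth
  simp only [one_smul, zero_smul, add_zero, d, add_sub_cancel] at this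
  linarith

end Hessian

theorem sub_le_mul_of_model_decrease {D s r μ L θ ζ : ℝ} (hθζ : θ ≤ ζ) (hζ : ζ < 1) (hL : 0 < L)
    (hs : 0 ≤ s) (hmodel : D + (s + μ * r ^ 2) / 2 ≤ ζ * D)
    (hclose : r ≤ (1 + (ζ - θ) / (1 - ζ)) * (3 * μ / L)) :
    D + s / 2 + L / 6 * r ^ 3 ≤ θ * D := by
  set a := (ζ - θ) / (1 - ζ)
  have ha : 0 ≤ a := div_nonneg (by linarith) (by linarith)
  have hθ : 1 - θ = (1 + a) * (1 - ζ) := by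
    have : a * (1 - ζ) = ζ - θ := div_mul_cancel₀ _ (by linarith)
    linarith
  have hLr : L * r ≤ (1 + a) * (3 * μ) := by
    rwa [← mul_div_assoc, le_div_iff₀ hL, mul_comm r] at hclose
  have hcubic : L * r ^ 3 ≤ (1 + a) * (3 * μ) * r ^ 2 := by
    calc L * r ^ 3 = L * r * r ^ 2 := by ring
      _ ≤ (1 + a) * (3 * μ) * r ^ 2 := by gcongr
  have hscaled : (1 - θ) * D ≤ (1 + a) * (-(s + μ * r ^ 2) / 2) := by
    rw [hθ, mul_assoc]
    gcongr
    linarith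
  nlinarith [mul_nonneg ha hs]

theorem stmt11_general {n : ℕ} (f g : E n → ℝ) (f' : E n → E n)
    (hess : E n → E n →L[ℝ] E n)
    (hfconv : ConvexOn ℝ Set.univ f)
    (hgrad : ∀ x, HasGradientAt f (f' x) x)
    (hhess : ∀ x, HasFDerivAt f' (hess x) x)
    (F : E n → ℝ) (hF : ∀ y, F y = f y + g y)
    (L₂ : ℝ) (hL₂ : 0 < L₂) (hlip2 : ∀ y z, ‖hess y - hess z‖ ≤ L₂ * ‖y - z‖)
    (θ ζ : ℝ) (hζ : ζ ∈ Set.Ioo θ 1)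
    (x₀ : E n) (μ : ℝ)
    (H : E n →L[ℝ] E n) (hH : H = hess x₀ + μ • ContinuousLinearMap.id ℝ (E n))
    (ℓ q : E n → ℝ)
    (hℓ : ∀ y, ℓ y = f x₀ + ⟪f' x₀, y - x₀⟫ + g y)
    (hq : ∀ y, q y = ℓ y + (1/2) * ⟪H (y - x₀), y - x₀⟫)
    (xh : E n) (hxh : q xh - q x₀ ≤ ζ * (ℓ xh - ℓ x₀))
    (hclose : ‖xh - x₀‖ ≤ (1 + (ζ - θ) / (1 - ζ)) * (3 * μ / L₂)) :
    F xh - F x₀ ≤ θ * (ℓ xh - ℓ x₀) := by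
  have hpsd := hfconv.inner_hessian_self_nonneg hgrad (hhess x₀) (xh - x₀)
  have htaylor := le_second_order_taylor_add_cubic hgrad hhess hlip2 x₀ xh
  have hmodel : q xh - q x₀
      = (ℓ xh - ℓ x₀) + (⟪hess x₀ (xh - x₀), xh - x₀⟫ + μ * ‖xh - x₀‖ ^ 2) / 2 := by
    simp only [hq, hH, sub_self, map_zero, inner_zero_left, add_apply, smul_apply,
      ContinuousLinearMap.id_apply, inner_add_left, real_inner_smul_left,
      real_inner_self_eq_norm_sq]
    ring
  have hdecrease := sub_le_mul_of_model_decrease hζ.1.le hζ.2 hL₂ hpsd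
    (hmodel ▸ hxh) hclose
  have hℓ_sub : ℓ xh - ℓ x₀ = ⟪f' x₀, xh - x₀⟫ + g xh - g x₀ := by
    simp only [hℓ, sub_self, inner_zero_right]
    ring
  rw [hF, hF]
  linarith

/-- If the Hessian map is L₂-Lipschitz in operator norm,
`θ ∈ (0,1/2)`, `ζ ∈ (θ,1)`, `μ > 0`, `H = ∇²f(x⁰) + μ·Id`, `x̂` satisfies
`q(x̂) − q(x⁰) ≤ ζ(ℓ(x̂) − ℓ(x⁰))` and `‖x̂ − x⁰‖ ≤ (1 + (ζ−θ)/(1−ζ))·(3μ/L₂)`,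
then `F(x̂) − F(x⁰) ≤ θ(ℓ(x̂) − ℓ(x⁰))`, i.e., unit step size passes the
line-search descent condition. -/
theorem stmt11 {n : ℕ} (f g : E n → ℝ) (f' : E n → E n)
    (hess : E n → E n →L[ℝ] E n)
    (hfconv : ConvexOn ℝ Set.univ f) (hfC2 : ContDiff ℝ 2 f)
    (hgrad : ∀ x, HasGradientAt f (f' x) x)
    (hhess : ∀ x, HasFDerivAt f' (hess x) x)
    (hsa : ∀ x u w, ⟪hess x u, w⟫ = ⟪u, hess x w⟫)
    (hgconv : ConvexOn ℝ Set.univ g) (hgcont : Continuous g)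
    (F : E n → ℝ) (hF : ∀ y, F y = f y + g y)
    (L₂ : ℝ) (hL₂ : 0 < L₂) (hlip2 : ∀ y z, ‖hess y - hess z‖ ≤ L₂ * ‖y - z‖)
    (θ ζ : ℝ) (hθ : θ ∈ Set.Ioo (0:ℝ) (1/2)) (hζ : ζ ∈ Set.Ioo θ 1)
    (x₀ : E n) (μ : ℝ) (hμ : 0 < μ)
    (H : E n →L[ℝ] E n) (hH : H = hess x₀ + μ • ContinuousLinearMap.id ℝ (E n))
    (ℓ q : E n → ℝ)
    (hℓ : ∀ y, ℓ y = f x₀ + ⟪f' x₀, y - x₀⟫ + g y)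
    (hq : ∀ y, q y = ℓ y + (1/2) * ⟪H (y - x₀), y - x₀⟫)
    (xh : E n) (hxh : q xh - q x₀ ≤ ζ * (ℓ xh - ℓ x₀))
    (hclose : ‖xh - x₀‖ ≤ (1 + (ζ - θ) / (1 - ζ)) * (3 * μ / L₂)) :
    F xh - F x₀ ≤ θ * (ℓ xh - ℓ x₀) :=
  stmt11_general f g f' hess hfconv hgrad hhess F hF L₂ hL₂ hlip2 θ ζ hζ x₀ μ H hH ℓ q hℓ hq xh hxh
    hclose
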